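/- arXiv:1804.02849 — 4 statements merged into one kernel-verified Lean document; each statement's English description precedes it below -/
import Mathlib

section
/- Let K be a number field with a unique prime 𝔓 above 2, and let E/K be an elliptic curve with full 2-torsion defined over K, potentially good reduction at every prime away from 𝔓, and potentially multiplicative reduction at 𝔓. Then some quadratic twist E' of E has conductor exactly 𝔓. -/
open NumberField IsDedekindDomain WeierstrassCurve WeierstrassCurve.Affine
open scoped Multiplicative

variable {K : Type*} [Field K] [NumberField K]

/-- `W` is an integral Weierstrass model at the prime `v` (all `aᵢ` are `v`-integral);
the multiplicative valuation being `≤ 1` corresponds to additive valuation `≥ 0`. -/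
def IsIntegralModelAt (W : WeierstrassCurve K) (v : HeightOneSpectrum (𝓞 K)) : Prop :=
  v.valuation K W.a₁ ≤ 1 ∧ v.valuation K W.a₂ ≤ 1 ∧ v.valuation K W.a₃ ≤ 1 ∧
    v.valuation K W.a₄ ≤ 1 ∧ v.valuation K W.a₆ ≤ 1

/-- An elliptic curve has good reduction at `v` iff it admits a `v`-integral model whose
discriminant is a `v`-adic unit. -/
def HasGoodReductionAt (W : WeierstrassCurve K) (v : HeightOneSpectrum (𝓞 K)) : Prop :=
  ∃ C : VariableChange K, IsIntegralModelAt (C • W) v ∧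
    v.valuation K (C • W).Δ = 1

/-- An elliptic curve has multiplicative reduction at `v` iff it admits a `v`-integral model
with `v(Δ) > 0` and `v(c₄) = 0`. -/
def HasMultiplicativeReductionAt (W : WeierstrassCurve K) (v : HeightOneSpectrum (𝓞 K)) : Prop :=
  ∃ C : VariableChange K, IsIntegralModelAt (C • W) v ∧
    v.valuation K (C • W).Δ < 1 ∧ v.valuation K (C • W).c₄ = 1

/-- An elliptic curve has conductor exactly the prime `P` iff it has multiplicative reduction
at `P` and good reduction at all other primes. -/
def HasConductorEq (W : WeierstrassCurve K) (P : HeightOneSpectrum (𝓞 K)) : Prop :=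
  HasMultiplicativeReductionAt W P ∧ ∀ q : HeightOneSpectrum (𝓞 K), q ≠ P → HasGoodReductionAt W q

/-- The narrow class group of a number field: the quotient of the group of invertible
fractional ideals by the principal fractional ideals generated by totally positive elements. -/
noncomputable def NarrowClassGroup (K : Type*) [Field K] [NumberField K] :=
  (FractionalIdeal (nonZeroDivisors (𝓞 K)) K)ˣ ⧸ Subgroup.closure
    {I : (FractionalIdeal (nonZeroDivisors (𝓞 K)) K)ˣ |
      ∃ x : K, (∀ φ : K →+* ℝ, 0 < φ x) ∧
        (I : FractionalIdeal (nonZeroDivisors (𝓞 K)) K) = FractionalIdeal.spanSingleton _ x}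

/-- The elliptic curve `Y² = X(X−a)(X+b) = X³ + (b−a)X² − abX`; every elliptic curve over `K`
with full `2`-torsion admits such a model. -/
def fullTwoTorsionCurve (a b : K) : WeierstrassCurve K :=
  ⟨0, b - a, 0, -(a * b), 0⟩

/-- The quadratic twist by `d` of a Weierstrass curve with `a₁ = a₃ = 0`, obtained by rescaling
`dY² = X³ + a₂X² + a₄X + a₆` to Weierstrass form. -/
def quadTwist (W : WeierstrassCurve K) (d : K) : WeierstrassCurve K :=
  ⟨0, d * W.a₂, 0, d ^ 2 * W.a₄, d ^ 3 * W.a₆⟩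

section GammaHelpers
variable {Γ : Type*} [LinearOrderedCommGroupWithZero Γ]

lemma invMul_le_one {u x : Γ} (hu : u ≠ 0) (h : x ≤ u) : u⁻¹ * x ≤ 1 := by
  calc u⁻¹ * x ≤ u⁻¹ * u := mul_le_mul_right h _
  _ = 1 := inv_mul_cancel₀ hu

lemma invMul_lt_one {u x : Γ} (hu : u ≠ 0) (h : x < u) : u⁻¹ * x < 1 := by
  have := (mul_lt_mul_iff_right₀ (show (0:Γ) < u⁻¹ by simp [zero_lt_iff, hu])).2 h
  rwa [inv_mul_cancel₀ hu] at this

lemma invMul_eq_one {u x : Γ} (hu : u ≠ 0) (h : x = u) : u⁻¹ * x = 1 := by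
  rw [h, inv_mul_cancel₀ hu]

lemma lt_of_one_lt_div' {x y : Γ} (hy : y ≠ 0) (h : 1 < x / y) : y < x := by
  rw [div_eq_mul_inv] at h
  have := (mul_lt_mul_iff_left₀ (show (0:Γ) < y by simp [zero_lt_iff, hy])).2 h
  rwa [one_mul, mul_assoc, inv_mul_cancel₀ hy, mul_one] at this

end GammaHelpers

/-- Additive `v`-adic valuation (as `Multiplicative.toAdd` of the multiplicative one);
junk value `0` at `x = 0`.  Note `aval v x ≤ 0` corresponds to `x` being `v`-integral. -/
noncomputable def aval (v : HeightOneSpectrum (𝓞 K)) (x : K) : ℤ :=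
  if h : v.valuation K x = 0 then 0 else Multiplicative.toAdd (WithZero.unzero h)

namespace aval

variable (v : HeightOneSpectrum (𝓞 K)) {x y : K}

lemma spec (hx : x ≠ 0) :
    v.valuation K x = ((Multiplicative.ofAdd (aval v x) : Multiplicative ℤ) : WithZero (Multiplicative ℤ)) := by
  have h : v.valuation K x ≠ 0 := (Valuation.ne_zero_iff _).mpr hx
  rw [aval, dif_neg h, ofAdd_toAdd, WithZero.coe_unzero]

lemma le_iff (hx : x ≠ 0) (hy : y ≠ 0) :
    v.valuation K x ≤ v.valuation K y ↔ aval v x ≤ aval v y := by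
  rw [spec v hx, spec v hy, WithZero.coe_le_coe, Multiplicative.ofAdd_le]

lemma lt_iff (hx : x ≠ 0) (hy : y ≠ 0) :
    v.valuation K x < v.valuation K y ↔ aval v x < aval v y := by
  rw [spec v hx, spec v hy, WithZero.coe_lt_coe, Multiplicative.ofAdd_lt]

lemma eq_iff (hx : x ≠ 0) (hy : y ≠ 0) :
    v.valuation K x = v.valuation K y ↔ aval v x = aval v y := by
  rw [spec v hx, spec v hy, WithZero.coe_inj, EmbeddingLike.apply_eq_iff_eq]

lemma le_zero_iff (hx : x ≠ 0) : aval v x ≤ 0 ↔ v.valuation K x ≤ 1 := by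
  rw [spec v hx, ← WithZero.coe_one, WithZero.coe_le_coe, ← ofAdd_zero, Multiplicative.ofAdd_le]

lemma lt_zero_iff (hx : x ≠ 0) : aval v x < 0 ↔ v.valuation K x < 1 := by
  rw [spec v hx, ← WithZero.coe_one, WithZero.coe_lt_coe, ← ofAdd_zero, Multiplicative.ofAdd_lt]

lemma eq_zero_iff (hx : x ≠ 0) : aval v x = 0 ↔ v.valuation K x = 1 := by
  rw [spec v hx, ← WithZero.coe_one, WithZero.coe_inj, ← ofAdd_zero,
    EmbeddingLike.apply_eq_iff_eq]

lemma mul (hx : x ≠ 0) (hy : y ≠ 0) : aval v (x * y) = aval v x + aval v y := by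
  have h := map_mul (v.valuation K) x y
  rw [spec v (mul_ne_zero hx hy), spec v hx, spec v hy, ← WithZero.coe_mul, WithZero.coe_inj,
    ← ofAdd_add, EmbeddingLike.apply_eq_iff_eq] at h
  exact h

lemma one : aval v (1 : K) = 0 := by
  have h := spec v (one_ne_zero : (1:K) ≠ 0)
  rw [map_one, ← WithZero.coe_one] at h
  have := WithZero.coe_inj.mp h
  rw [← ofAdd_zero] at this
  exact (EmbeddingLike.apply_eq_iff_eq _).mp this.symm

lemma pow (n : ℕ) (hx : x ≠ 0) : aval v (x ^ n) = n * aval v x := by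
  induction n with
  | zero => simpa using one v
  | succ n ih => rw [pow_succ, mul v (pow_ne_zero _ hx) hx, ih]; push_cast; ring

lemma neg (x : K) : aval v (-x) = aval v x := by
  unfold aval
  simp only [Valuation.map_neg]

lemma div (hx : x ≠ 0) (hy : y ≠ 0) : aval v (x / y) = aval v x - aval v y := by
  have h : x / y * y = x := div_mul_cancel₀ x hy
  have := mul v (div_ne_zero hx hy) hy
  rw [h] at this
  omega

lemma add_le (hx : x ≠ 0) (hy : y ≠ 0) (hxy : x + y ≠ 0) :
    aval v (x + y) ≤ max (aval v x) (aval v y) := by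
  rcases le_max_iff.mp ((v.valuation K).map_add x y) with h | h
  · exact le_max_of_le_left ((le_iff v hxy hx).mp h)
  · exact le_max_of_le_right ((le_iff v hxy hy).mp h)

lemma sub_le (hx : x ≠ 0) (hy : y ≠ 0) (hxy : x - y ≠ 0) :
    aval v (x - y) ≤ max (aval v x) (aval v y) := by
  rcases le_max_iff.mp ((v.valuation K).map_sub x y) with h | h
  · exact le_max_of_le_left ((le_iff v hxy hx).mp h)
  · exact le_max_of_le_right ((le_iff v hxy hy).mp h)

lemma add_eq_left (hx : x ≠ 0) (hy : y ≠ 0) (h : aval v y < aval v x) :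
    aval v (x + y) = aval v x := by
  have h' : v.valuation K y < v.valuation K x := (lt_iff v hy hx).mpr h
  have he := (v.valuation K).map_add_eq_of_lt_left h'
  have hne : x + y ≠ 0 := by
    intro h0
    rw [h0, map_zero] at he
    exact hx ((Valuation.zero_iff _).mp he.symm)
  exact (eq_iff v hne hx).mp he

lemma add_eq_right (hx : x ≠ 0) (hy : y ≠ 0) (h : aval v x < aval v y) :
    aval v (x + y) = aval v y := by
  rw [add_comm]; exact add_eq_left v hy hx h

lemma sub_eq_right (hx : x ≠ 0) (hy : y ≠ 0) (h : aval v x < aval v y) :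
    aval v (x - y) = aval v y := by
  rw [sub_eq_add_neg]
  rw [← neg v y] at h ⊢
  exact add_eq_right v hx (neg_ne_zero.mpr hy) h

end aval

section ValTransfer
variable (v : HeightOneSpectrum (𝓞 K)) {x y : K}

lemma val_le_val (hy : y ≠ 0) (h : x ≠ 0 → aval v x ≤ aval v y) :
    v.valuation K x ≤ v.valuation K y := by
  rcases eq_or_ne x 0 with rfl | hx
  · simp [zero_le']
  · exact (aval.le_iff v hx hy).mpr (h hx)

lemma val_lt_val (hy : y ≠ 0) (h : x ≠ 0 → aval v x < aval v y) :
    v.valuation K x < v.valuation K y := by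
  rcases eq_or_ne x 0 with rfl | hx
  · rw [map_zero, zero_lt_iff]
    exact (Valuation.ne_zero_iff _).mpr hy
  · exact (aval.lt_iff v hx hy).mpr (h hx)

lemma val_eq_val (hx : x ≠ 0) (hy : y ≠ 0) (h : aval v x = aval v y) :
    v.valuation K x = v.valuation K y :=
  (aval.eq_iff v hx hy).mpr h

end ValTransfer

lemma base_Δ (a b : K) : (fullTwoTorsionCurve a b).Δ = 2^4*(a*b*(a+b))^2 := by
  simp only [fullTwoTorsionCurve, WeierstrassCurve.Δ, WeierstrassCurve.b₂, WeierstrassCurve.b₄,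
    WeierstrassCurve.b₆, WeierstrassCurve.b₈]
  ring

lemma base_c₄ (a b : K) : (fullTwoTorsionCurve a b).c₄ = 2^4*(a^2+a*b+b^2) := by
  simp only [fullTwoTorsionCurve, WeierstrassCurve.c₄, WeierstrassCurve.b₂, WeierstrassCurve.b₄]
  ring

lemma quadTwist_Δ (a b d : K) :
    (quadTwist (fullTwoTorsionCurve a b) d).Δ = 2^4*d^6*(a*b*(a+b))^2 := by
  simp only [quadTwist, fullTwoTorsionCurve, WeierstrassCurve.Δ, WeierstrassCurve.b₂,
    WeierstrassCurve.b₄, WeierstrassCurve.b₆, WeierstrassCurve.b₈]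
  ring

lemma quadTwist_c₄ (a b d : K) :
    (quadTwist (fullTwoTorsionCurve a b) d).c₄ = 2^4*(d^2*(a^2+a*b+b^2)) := by
  simp only [quadTwist, fullTwoTorsionCurve, WeierstrassCurve.c₄, WeierstrassCurve.b₂,
    WeierstrassCurve.b₄]
  ring

lemma good_core (v : HeightOneSpectrum (𝓞 K)) {a b d c : K} (hc : c ≠ 0)
    (h₂ : v.valuation K (d*(b-a)) ≤ v.valuation K (c^2))
    (h₄ : v.valuation K (d^2*(-(a*b))) ≤ v.valuation K (c^4))
    (hΔ : v.valuation K (2^4*d^6*(a*b*(a+b))^2) = v.valuation K (c^12)) :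
    HasGoodReductionAt (quadTwist (fullTwoTorsionCurve a b) d) v := by
  refine ⟨⟨Units.mk0 c hc, 0, 0, 0⟩, ?_, ?_⟩
  · refine ⟨?_, ?_, ?_, ?_, ?_⟩
    · rw [show ((⟨Units.mk0 c hc, 0, 0, 0⟩ : VariableChange K) • quadTwist (fullTwoTorsionCurve a b) d).a₁ = 0 by
          simp [quadTwist, fullTwoTorsionCurve, WeierstrassCurve.variableChange_def]]
      simp [zero_le']
    · rw [show ((⟨Units.mk0 c hc, 0, 0, 0⟩ : VariableChange K) • quadTwist (fullTwoTorsionCurve a b) d).a₂ = (c^2)⁻¹ * (d*(b-a)) by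
          simp [quadTwist, fullTwoTorsionCurve, WeierstrassCurve.variableChange_def]; try ring]
      rw [map_mul, map_inv₀]
      exact invMul_le_one ((Valuation.ne_zero_iff _).mpr (pow_ne_zero _ hc)) h₂
    · rw [show ((⟨Units.mk0 c hc, 0, 0, 0⟩ : VariableChange K) • quadTwist (fullTwoTorsionCurve a b) d).a₃ = 0 by
          simp [quadTwist, fullTwoTorsionCurve, WeierstrassCurve.variableChange_def]]
      simp [zero_le']
    · rw [show ((⟨Units.mk0 c hc, 0, 0, 0⟩ : VariableChange K) • quadTwist (fullTwoTorsionCurve a b) d).a₄ = (c^4)⁻¹ * (d^2*(-(a*b))) by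
          simp [quadTwist, fullTwoTorsionCurve, WeierstrassCurve.variableChange_def]; try ring]
      rw [map_mul, map_inv₀]
      exact invMul_le_one ((Valuation.ne_zero_iff _).mpr (pow_ne_zero _ hc)) h₄
    · rw [show ((⟨Units.mk0 c hc, 0, 0, 0⟩ : VariableChange K) • quadTwist (fullTwoTorsionCurve a b) d).a₆ = 0 by
          simp [quadTwist, fullTwoTorsionCurve, WeierstrassCurve.variableChange_def]]
      simp [zero_le']
  · rw [show ((⟨Units.mk0 c hc, 0, 0, 0⟩ : VariableChange K) • quadTwist (fullTwoTorsionCurve a b) d).Δ = (c^12)⁻¹ * (2^4*d^6*(a*b*(a+b))^2) by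
        rw [WeierstrassCurve.variableChange_Δ, quadTwist_Δ]
        simp
        try ring
        try left
        try trivial]
    rw [map_mul, map_inv₀]
    exact invMul_eq_one ((Valuation.ne_zero_iff _).mpr (pow_ne_zero _ hc)) hΔ

lemma mult_core (v : HeightOneSpectrum (𝓞 K)) {a b d c r : K} (hc : c ≠ 0) (h2 : (2:K) ≠ 0)
    (h₂ : v.valuation K (d*(b-a) + 3*r - c^2) ≤ v.valuation K ((2*c)^2))
    (h₄ : v.valuation K (d^2*(-(a*b)) + 2*r*(d*(b-a)) + 3*r^2) ≤ v.valuation K ((2*c)^4))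
    (h₆ : v.valuation K (r*(d^2*(-(a*b))) + r^2*(d*(b-a)) + r^3) ≤ v.valuation K ((2*c)^6))
    (hΔ : v.valuation K (2^4*d^6*(a*b*(a+b))^2) < v.valuation K ((2*c)^12))
    (hc₄ : v.valuation K (2^4*(d^2*(a^2+a*b+b^2))) = v.valuation K ((2*c)^4)) :
    HasMultiplicativeReductionAt (quadTwist (fullTwoTorsionCurve a b) d) v := by
  have h2c : (2*c : K) ≠ 0 := mul_ne_zero h2 hc
  refine ⟨⟨Units.mk0 (2*c) h2c, r, c, 0⟩, ⟨?_, ?_, ?_, ?_, ?_⟩, ?_, ?_⟩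
  · rw [show ((⟨Units.mk0 (2*c) h2c, r, c, 0⟩ : VariableChange K) • quadTwist (fullTwoTorsionCurve a b) d).a₁ = 1 by
        simp [quadTwist, fullTwoTorsionCurve, WeierstrassCurve.variableChange_def]
        try field_simp
        try ring
        try exact Or.inl trivial
        try left
        try trivial]
    simp
  · rw [show ((⟨Units.mk0 (2*c) h2c, r, c, 0⟩ : VariableChange K) • quadTwist (fullTwoTorsionCurve a b) d).a₂ = ((2*c)^2)⁻¹ * (d*(b-a) + 3*r - c^2) by
        simp [quadTwist, fullTwoTorsionCurve, WeierstrassCurve.variableChange_def]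
        try field_simp
        try ring
        try exact Or.inl trivial
        try left
        try trivial]
    rw [map_mul, map_inv₀]
    exact invMul_le_one ((Valuation.ne_zero_iff _).mpr (pow_ne_zero _ h2c)) h₂
  · rw [show ((⟨Units.mk0 (2*c) h2c, r, c, 0⟩ : VariableChange K) • quadTwist (fullTwoTorsionCurve a b) d).a₃ = 0 by
        simp [quadTwist, fullTwoTorsionCurve, WeierstrassCurve.variableChange_def]]
    simp [zero_le']
  · rw [show ((⟨Units.mk0 (2*c) h2c, r, c, 0⟩ : VariableChange K) • quadTwist (fullTwoTorsionCurve a b) d).a₄ =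
        ((2*c)^4)⁻¹ * (d^2*(-(a*b)) + 2*r*(d*(b-a)) + 3*r^2) by
        simp [quadTwist, fullTwoTorsionCurve, WeierstrassCurve.variableChange_def]
        try field_simp
        try ring
        try exact Or.inl trivial
        try left
        try trivial]
    rw [map_mul, map_inv₀]
    exact invMul_le_one ((Valuation.ne_zero_iff _).mpr (pow_ne_zero _ h2c)) h₄
  · rw [show ((⟨Units.mk0 (2*c) h2c, r, c, 0⟩ : VariableChange K) • quadTwist (fullTwoTorsionCurve a b) d).a₆ =
        ((2*c)^6)⁻¹ * (r*(d^2*(-(a*b))) + r^2*(d*(b-a)) + r^3) by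
        simp [quadTwist, fullTwoTorsionCurve, WeierstrassCurve.variableChange_def]
        try field_simp
        try ring
        try exact Or.inl trivial
        try left
        try trivial]
    rw [map_mul, map_inv₀]
    exact invMul_le_one ((Valuation.ne_zero_iff _).mpr (pow_ne_zero _ h2c)) h₆
  · rw [show ((⟨Units.mk0 (2*c) h2c, r, c, 0⟩ : VariableChange K) • quadTwist (fullTwoTorsionCurve a b) d).Δ = ((2*c)^12)⁻¹ * (2^4*d^6*(a*b*(a+b))^2) by
        rw [WeierstrassCurve.variableChange_Δ, quadTwist_Δ]
        simp
        try ring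
        try left
        try trivial]
    rw [map_mul, map_inv₀]
    exact invMul_lt_one ((Valuation.ne_zero_iff _).mpr (pow_ne_zero _ h2c)) hΔ
  · rw [show ((⟨Units.mk0 (2*c) h2c, r, c, 0⟩ : VariableChange K) • quadTwist (fullTwoTorsionCurve a b) d).c₄ = ((2*c)^4)⁻¹ * (2^4*(d^2*(a^2+a*b+b^2))) by
        rw [WeierstrassCurve.variableChange_c₄, quadTwist_c₄]
        simp
        try ring
        try left
        try trivial]
    rw [map_mul, map_inv₀]
    exact invMul_eq_one ((Valuation.ne_zero_iff _).mpr (pow_ne_zero _ h2c)) hc₄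

lemma sum_sq_ne (v : HeightOneSpectrum (𝓞 K)) {a b : K} (ha : a ≠ 0) (hb : b ≠ 0)
    (hab : a + b ≠ 0) (hsum : a^2 + a*b + b^2 ≠ 0) : True := trivial

/-- If `v b < v a` (additively), then `aval v (a²+ab+b²) = 2 aval v a`. -/
lemma S_eq_left (v : HeightOneSpectrum (𝓞 K)) {a b : K} (ha : a ≠ 0) (hb : b ≠ 0)
    (hab : a + b ≠ 0) (h : aval v b < aval v a) :
    aval v (a^2 + a*b + b^2) = 2 * aval v a := by
  have hz : aval v (a + b) = aval v a := aval.add_eq_left v ha hb h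
  have hbab : b * (a + b) ≠ 0 := mul_ne_zero hb hab
  have h3 : aval v (b * (a + b)) < aval v (a ^ 2) := by
    rw [aval.mul v hb hab, aval.pow v 2 ha, hz]; omega
  have e2 : a^2 + a*b + b^2 = a^2 + b*(a+b) := by ring
  rw [e2, aval.add_eq_left v (pow_ne_zero 2 ha) hbab h3, aval.pow v 2 ha]; ring

lemma S_eq_right (v : HeightOneSpectrum (𝓞 K)) {a b : K} (ha : a ≠ 0) (hb : b ≠ 0)
    (hab : a + b ≠ 0) (h : aval v a < aval v b) :
    aval v (a^2 + a*b + b^2) = 2 * aval v b := by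
  have e : a^2 + a*b + b^2 = b^2 + b*a + a^2 := by ring
  rw [e]
  exact S_eq_left v hb ha (by rwa [add_comm]) h

/-- If `aval v ((a+b)²) < aval v (ab)`, then `aval v (a²+ab+b²) = aval v a + aval v b`. -/
lemma S_eq_mid (v : HeightOneSpectrum (𝓞 K)) {a b : K} (ha : a ≠ 0) (hb : b ≠ 0)
    (hab : a + b ≠ 0) (h : aval v ((a+b)^2) < aval v (a*b)) :
    aval v (a^2 + a*b + b^2) = aval v a + aval v b := by
  have e : a^2 + a*b + b^2 = (a+b)^2 - a*b := by ring
  rw [e, aval.sub_eq_right v (pow_ne_zero 2 hab) (mul_ne_zero ha hb) h, aval.mul v ha hb]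

lemma S_le_max (v : HeightOneSpectrum (𝓞 K)) {a b : K} (ha : a ≠ 0) (hb : b ≠ 0)
    (hab : a + b ≠ 0) (hsum : a^2 + a*b + b^2 ≠ 0) :
    aval v (a^2 + a*b + b^2) ≤ max (aval v ((a+b)^2)) (aval v (a*b)) := by
  have e : a^2 + a*b + b^2 = (a+b)^2 - a*b := by ring
  rw [e]
  exact aval.sub_le v (pow_ne_zero 2 hab) (mul_ne_zero ha hb) (by rw [← e]; exact hsum)

lemma q_facts (v : HeightOneSpectrum (𝓞 K)) {a b : K} (ha : a ≠ 0) (hb : b ≠ 0)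
    (hab : a + b ≠ 0) (hsum : a^2 + a*b + b^2 ≠ 0) (he : aval v (2:K) = 0)
    (hj : v.valuation K ((2^4*(a^2+a*b+b^2))^3 / (2^4*(a*b*(a+b))^2)) ≤ 1) :
    aval v b = aval v a ∧ aval v (a + b) = aval v a := by
  have h2 : (2:K) ≠ 0 := two_ne_zero
  have hprod : a*b*(a+b) ≠ 0 := mul_ne_zero (mul_ne_zero ha hb) hab
  have hnum : (2:K)^4*(a^2+a*b+b^2) ≠ 0 := mul_ne_zero (pow_ne_zero _ h2) hsum
  have hden : (2:K)^4*(a*b*(a+b))^2 ≠ 0 := mul_ne_zero (pow_ne_zero _ h2) (pow_ne_zero _ hprod)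
  have hbig := (aval.le_zero_iff v (div_ne_zero (pow_ne_zero 3 hnum) hden)).mpr hj
  rw [aval.div v (pow_ne_zero 3 hnum) hden, aval.pow v 3 hnum,
    aval.mul v (pow_ne_zero 4 h2) hsum,
    aval.mul v (pow_ne_zero 4 h2) (pow_ne_zero 2 hprod), aval.pow v 2 hprod,
    aval.mul v (mul_ne_zero ha hb) hab, aval.mul v ha hb, aval.pow v 4 h2, he] at hbig
  rcases lt_trichotomy (aval v b) (aval v a) with h | h | h
  · exfalso
    have hz := aval.add_eq_left v ha hb h
    have hS := S_eq_left v ha hb hab h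
    omega
  · refine ⟨h, ?_⟩
    have hZle : aval v (a+b) ≤ aval v a := by
      have hle := aval.add_le v ha hb hab
      rw [h, max_self] at hle
      exact hle
    by_contra hne
    have hZlt : aval v (a+b) < aval v a := lt_of_le_of_ne hZle hne
    have hmid : aval v ((a+b)^2) < aval v (a*b) := by
      rw [aval.pow v 2 hab, aval.mul v ha hb]; omega
    have hS := S_eq_mid v ha hb hab hmid
    omega
  · exfalso
    have hz := aval.add_eq_right v ha hb h
    have hS := S_eq_right v ha hb hab h
    omega


/-- **Kraus's lemma.**  Let `K` be a number field with a unique prime `𝔓` above `2`, and let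
`E : Y² = X(X−a)(X+b)` be an elliptic curve with full `2`-torsion over `K`, with potentially
good reduction at every prime away from `𝔓` (the `j`-invariant is integral there) and
potentially multiplicative reduction at `𝔓` (the `j`-invariant has negative valuation there).
Then some quadratic twist `E'` of `E` has conductor exactly `𝔓`. -/
theorem quadratic_twist_of_conductor_P
    (P : HeightOneSpectrum (𝓞 K)) (hmem : (2 : 𝓞 K) ∈ P.asIdeal)
    (huniq : ∀ q : HeightOneSpectrum (𝓞 K), (2 : 𝓞 K) ∈ q.asIdeal → q = P)
    (a b : K) (ha : a ≠ 0) (hb : b ≠ 0) (hab : a + b ≠ 0)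
    (hpotgood : ∀ q : HeightOneSpectrum (𝓞 K), q ≠ P →
      q.valuation K ((fullTwoTorsionCurve a b).c₄ ^ 3 / (fullTwoTorsionCurve a b).Δ) ≤ 1)
    (hpotmult : 1 < P.valuation K ((fullTwoTorsionCurve a b).c₄ ^ 3 / (fullTwoTorsionCurve a b).Δ)) :
    ∃ d : K, d ≠ 0 ∧ HasConductorEq (quadTwist (fullTwoTorsionCurve a b) d) P := by
  have h2K : (2:K) ≠ 0 := two_ne_zero
  have hprod : a*b*(a+b) ≠ 0 := mul_ne_zero (mul_ne_zero ha hb) hab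
  have hval2 : ∀ q : HeightOneSpectrum (𝓞 K), q ≠ P → q.valuation K (2:K) = 1 := by
    intro q hq
    have hle : q.valuation K (2:K) ≤ 1 := by
      rw [show ((2:K)) = algebraMap (𝓞 K) K 2 from (map_ofNat _ 2).symm]
      exact q.valuation_le_one 2
    rcases lt_or_eq_of_le hle with hlt | heq
    · exfalso
      rw [show ((2:K)) = algebraMap (𝓞 K) K 2 from (map_ofNat _ 2).symm,
        q.valuation_lt_one_iff_dvd] at hlt
      exact hq (huniq q (Ideal.dvd_span_singleton.mp hlt))
    · exact heq
  have hPlt : P.valuation K (2:K) < 1 := by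
    rw [show ((2:K)) = algebraMap (𝓞 K) K 2 from (map_ofNat _ 2).symm,
      P.valuation_lt_one_iff_dvd]
    exact Ideal.dvd_span_singleton.mpr hmem
  have hsum : a^2 + a*b + b^2 ≠ 0 := by
    intro h
    rw [base_c₄, h] at hpotmult
    simp only [mul_zero, ne_eq, OfNat.ofNat_ne_zero, not_false_eq_true, zero_pow, zero_div,
      map_zero] at hpotmult
    exact absurd hpotmult (not_lt.2 zero_le')
  rw [base_c₄, base_Δ] at hpotmult
  have hjq : ∀ q : HeightOneSpectrum (𝓞 K), q ≠ P →
      q.valuation K ((2^4*(a^2+a*b+b^2))^3 / (2^4*(a*b*(a+b))^2)) ≤ 1 := by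
    intro q hq
    have := hpotgood q hq
    rwa [base_c₄, base_Δ] at this
  have hnum : (2:K)^4*(a^2+a*b+b^2) ≠ 0 := mul_ne_zero (pow_ne_zero _ h2K) hsum
  have hden : (2:K)^4*(a*b*(a+b))^2 ≠ 0 := mul_ne_zero (pow_ne_zero _ h2K) (pow_ne_zero _ hprod)
  have eT : aval P (2:K) < 0 := (aval.lt_zero_iff P h2K).mpr hPlt
  have hP9 : 4*aval P 2 + 2*(aval P a + aval P b + aval P (a+b)) <
      3*(4*aval P 2 + aval P (a^2+a*b+b^2)) := by
    have hPmain : P.valuation K (2^4*(a*b*(a+b))^2) < P.valuation K ((2^4*(a^2+a*b+b^2))^3) := by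
      rw [map_div₀] at hpotmult
      exact lt_of_one_lt_div' ((Valuation.ne_zero_iff _).mpr hden) hpotmult
    have h9 := (aval.lt_iff P hden (pow_ne_zero 3 hnum)).mp hPmain
    rw [aval.pow P 3 hnum, aval.mul P (pow_ne_zero 4 h2K) hsum,
      aval.mul P (pow_ne_zero 4 h2K) (pow_ne_zero 2 hprod), aval.pow P 2 hprod,
      aval.mul P (mul_ne_zero ha hb) hab, aval.mul P ha hb, aval.pow P 4 h2K] at h9
    omega
  rcases lt_trichotomy (aval P b) (aval P a) with hc | hc | hc
  · -- case v(b) < v(a) additively reversed; d = -a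
    have hz : aval P (a+b) = aval P a := aval.add_eq_left P ha hb hc
    have hS : aval P (a^2+a*b+b^2) = 2*aval P a := S_eq_left P ha hb hab hc
    have key : aval P b < 4*aval P 2 + aval P a := by omega
    have h2a : (2*a : K) ≠ 0 := mul_ne_zero h2K ha
    refine ⟨-a, neg_ne_zero.mpr ha, ?_, ?_⟩
    · apply mult_core P (c := a) (r := 0) ha h2K
      · rw [show -a*(b-a) + 3*(0:K) - a^2 = -(a*b) by ring]
        apply val_le_val P (pow_ne_zero 2 h2a); intro _
        rw [aval.neg, aval.mul P ha hb, aval.pow P 2 h2a, aval.mul P h2K ha]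
        omega
      · rw [show (-a)^2*(-(a*b)) + 2*0*(-a*(b-a)) + 3*(0:K)^2 = -(a^3*b) by ring]
        apply val_le_val P (pow_ne_zero 4 h2a); intro _
        rw [aval.neg, aval.mul P (pow_ne_zero 3 ha) hb, aval.pow P 3 ha,
          aval.pow P 4 h2a, aval.mul P h2K ha]
        omega
      · rw [show (0:K)*((-a)^2*(-(a*b))) + 0^2*(-a*(b-a)) + 0^3 = (0:K) by ring, map_zero]
        exact zero_le'
      · rw [show (2:K)^4*(-a)^6*(a*b*(a+b))^2 = 2^4*a^6*(a*b*(a+b))^2 by ring]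
        apply val_lt_val P (pow_ne_zero 12 h2a); intro _
        rw [aval.mul P (mul_ne_zero (pow_ne_zero 4 h2K) (pow_ne_zero 6 ha)) (pow_ne_zero 2 hprod),
          aval.mul P (pow_ne_zero 4 h2K) (pow_ne_zero 6 ha), aval.pow P 4 h2K, aval.pow P 6 ha,
          aval.pow P 2 hprod, aval.mul P (mul_ne_zero ha hb) hab, aval.mul P ha hb,
          aval.pow P 12 h2a, aval.mul P h2K ha]
        omega
      · rw [show (2:K)^4*((-a)^2*(a^2+a*b+b^2)) = 2^4*(a^2*(a^2+a*b+b^2)) by ring]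
        apply val_eq_val P
          (mul_ne_zero (pow_ne_zero 4 h2K) (mul_ne_zero (pow_ne_zero 2 ha) hsum))
          (pow_ne_zero 4 h2a)
        rw [aval.mul P (pow_ne_zero 4 h2K) (mul_ne_zero (pow_ne_zero 2 ha) hsum),
          aval.mul P (pow_ne_zero 2 ha) hsum, aval.pow P 2 ha, aval.pow P 4 h2K,
          aval.pow P 4 h2a, aval.mul P h2K ha]
        omega
    · intro q hq
      obtain ⟨hBA, hZA⟩ := q_facts q ha hb hab hsum
        ((aval.eq_zero_iff q h2K).mpr (hval2 q hq)) (hjq q hq)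
      have hq2 : aval q (2:K) = 0 := (aval.eq_zero_iff q h2K).mpr (hval2 q hq)
      apply good_core q (c := a) ha
      · apply val_le_val q (pow_ne_zero 2 ha); intro hne
        have hba : b - a ≠ 0 := by
          intro h0; rw [h0, mul_zero] at hne; exact hne rfl
        rw [show -a*(b-a) = -(a*(b-a)) by ring, aval.neg, aval.mul q ha hba, aval.pow q 2 ha]
        have := aval.sub_le q hb ha hba
        omega
      · apply val_le_val q (pow_ne_zero 4 ha); intro _
        rw [show (-a)^2*(-(a*b)) = -(a^2*(a*b)) by ring, aval.neg,
          aval.mul q (pow_ne_zero 2 ha) (mul_ne_zero ha hb), aval.pow q 2 ha,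
          aval.mul q ha hb, aval.pow q 4 ha]
        omega
      · apply val_eq_val q
          (by rw [show (2:K)^4*(-a)^6*(a*b*(a+b))^2 = 2^4*a^6*(a*b*(a+b))^2 by ring]
              exact mul_ne_zero (mul_ne_zero (pow_ne_zero 4 h2K) (pow_ne_zero 6 ha))
                (pow_ne_zero 2 hprod))
          (pow_ne_zero 12 ha)
        rw [show (2:K)^4*(-a)^6*(a*b*(a+b))^2 = 2^4*a^6*(a*b*(a+b))^2 by ring,
          aval.mul q (mul_ne_zero (pow_ne_zero 4 h2K) (pow_ne_zero 6 ha)) (pow_ne_zero 2 hprod),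
          aval.mul q (pow_ne_zero 4 h2K) (pow_ne_zero 6 ha), aval.pow q 4 h2K, aval.pow q 6 ha,
          aval.pow q 2 hprod, aval.mul q (mul_ne_zero ha hb) hab, aval.mul q ha hb,
          aval.pow q 12 ha]
        omega
  · -- case v(b) = v(a); d = a, r = a^2
    have hZle : aval P (a+b) ≤ aval P a := by
      have hle := aval.add_le P ha hb hab
      rw [hc, max_self] at hle
      exact hle
    have key : aval P (a+b) < 4*aval P 2 + aval P a := by
      have h2' := S_le_max P ha hb hab hsum
      rw [aval.pow P 2 hab, aval.mul P ha hb] at h2'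
      rcases le_max_iff.mp h2' with y | y <;> omega
    have hZlt : aval P (a+b) < aval P a := by omega
    have hS : aval P (a^2+a*b+b^2) = 2*aval P a := by
      have hmid : aval P ((a+b)^2) < aval P (a*b) := by
        rw [aval.pow P 2 hab, aval.mul P ha hb]; omega
      have := S_eq_mid P ha hb hab hmid
      omega
    have h2a : (2*a : K) ≠ 0 := mul_ne_zero h2K ha
    refine ⟨a, ha, ?_, ?_⟩
    · apply mult_core P (c := a) (r := a^2) ha h2K
      · rw [show a*(b-a) + 3*a^2 - a^2 = a*(a+b) by ring]
        apply val_le_val P (pow_ne_zero 2 h2a); intro _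
        rw [aval.mul P ha hab, aval.pow P 2 h2a, aval.mul P h2K ha]
        omega
      · rw [show a^2*(-(a*b)) + 2*a^2*(a*(b-a)) + 3*(a^2)^2 = a^3*(a+b) by ring]
        apply val_le_val P (pow_ne_zero 4 h2a); intro _
        rw [aval.mul P (pow_ne_zero 3 ha) hab, aval.pow P 3 ha,
          aval.pow P 4 h2a, aval.mul P h2K ha]
        omega
      · rw [show a^2*(a^2*(-(a*b))) + (a^2)^2*(a*(b-a)) + (a^2)^3 = (0:K) by ring, map_zero]
        exact zero_le'
      · apply val_lt_val P (pow_ne_zero 12 h2a); intro _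
        rw [aval.mul P (mul_ne_zero (pow_ne_zero 4 h2K) (pow_ne_zero 6 ha)) (pow_ne_zero 2 hprod),
          aval.mul P (pow_ne_zero 4 h2K) (pow_ne_zero 6 ha), aval.pow P 4 h2K, aval.pow P 6 ha,
          aval.pow P 2 hprod, aval.mul P (mul_ne_zero ha hb) hab, aval.mul P ha hb,
          aval.pow P 12 h2a, aval.mul P h2K ha]
        omega
      · apply val_eq_val P
          (mul_ne_zero (pow_ne_zero 4 h2K) (mul_ne_zero (pow_ne_zero 2 ha) hsum))
          (pow_ne_zero 4 h2a)
        rw [aval.mul P (pow_ne_zero 4 h2K) (mul_ne_zero (pow_ne_zero 2 ha) hsum),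
          aval.mul P (pow_ne_zero 2 ha) hsum, aval.pow P 2 ha, aval.pow P 4 h2K,
          aval.pow P 4 h2a, aval.mul P h2K ha]
        omega
    · intro q hq
      obtain ⟨hBA, hZA⟩ := q_facts q ha hb hab hsum
        ((aval.eq_zero_iff q h2K).mpr (hval2 q hq)) (hjq q hq)
      have hq2 : aval q (2:K) = 0 := (aval.eq_zero_iff q h2K).mpr (hval2 q hq)
      apply good_core q (c := a) ha
      · apply val_le_val q (pow_ne_zero 2 ha); intro hne
        have hba : b - a ≠ 0 := by
          intro h0; rw [h0, mul_zero] at hne; exact hne rfl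
        rw [aval.mul q ha hba, aval.pow q 2 ha]
        have := aval.sub_le q hb ha hba
        omega
      · apply val_le_val q (pow_ne_zero 4 ha); intro _
        rw [show a^2*(-(a*b)) = -(a^2*(a*b)) by ring, aval.neg,
          aval.mul q (pow_ne_zero 2 ha) (mul_ne_zero ha hb), aval.pow q 2 ha,
          aval.mul q ha hb, aval.pow q 4 ha]
        omega
      · apply val_eq_val q
          (mul_ne_zero (mul_ne_zero (pow_ne_zero 4 h2K) (pow_ne_zero 6 ha)) (pow_ne_zero 2 hprod))
          (pow_ne_zero 12 ha)
        rw [aval.mul q (mul_ne_zero (pow_ne_zero 4 h2K) (pow_ne_zero 6 ha)) (pow_ne_zero 2 hprod),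
          aval.mul q (pow_ne_zero 4 h2K) (pow_ne_zero 6 ha), aval.pow q 4 h2K, aval.pow q 6 ha,
          aval.pow q 2 hprod, aval.mul q (mul_ne_zero ha hb) hab, aval.mul q ha hb,
          aval.pow q 12 ha]
        omega
  · -- case v(a) < v(b); d = b
    have hz : aval P (a+b) = aval P b := aval.add_eq_right P ha hb hc
    have hS : aval P (a^2+a*b+b^2) = 2*aval P b := S_eq_right P ha hb hab hc
    have key : aval P a < 4*aval P 2 + aval P b := by omega
    have h2b : (2*b : K) ≠ 0 := mul_ne_zero h2K hb
    refine ⟨b, hb, ?_, ?_⟩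
    · apply mult_core P (c := b) (r := 0) hb h2K
      · rw [show b*(b-a) + 3*(0:K) - b^2 = -(a*b) by ring]
        apply val_le_val P (pow_ne_zero 2 h2b); intro _
        rw [aval.neg, aval.mul P ha hb, aval.pow P 2 h2b, aval.mul P h2K hb]
        omega
      · rw [show b^2*(-(a*b)) + 2*0*(b*(b-a)) + 3*(0:K)^2 = -(a*b^3) by ring]
        apply val_le_val P (pow_ne_zero 4 h2b); intro _
        rw [aval.neg, aval.mul P ha (pow_ne_zero 3 hb), aval.pow P 3 hb,
          aval.pow P 4 h2b, aval.mul P h2K hb]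
        omega
      · rw [show (0:K)*(b^2*(-(a*b))) + 0^2*(b*(b-a)) + 0^3 = (0:K) by ring, map_zero]
        exact zero_le'
      · apply val_lt_val P (pow_ne_zero 12 h2b); intro _
        rw [aval.mul P (mul_ne_zero (pow_ne_zero 4 h2K) (pow_ne_zero 6 hb)) (pow_ne_zero 2 hprod),
          aval.mul P (pow_ne_zero 4 h2K) (pow_ne_zero 6 hb), aval.pow P 4 h2K, aval.pow P 6 hb,
          aval.pow P 2 hprod, aval.mul P (mul_ne_zero ha hb) hab, aval.mul P ha hb,
          aval.pow P 12 h2b, aval.mul P h2K hb]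
        omega
      · apply val_eq_val P
          (mul_ne_zero (pow_ne_zero 4 h2K) (mul_ne_zero (pow_ne_zero 2 hb) hsum))
          (pow_ne_zero 4 h2b)
        rw [aval.mul P (pow_ne_zero 4 h2K) (mul_ne_zero (pow_ne_zero 2 hb) hsum),
          aval.mul P (pow_ne_zero 2 hb) hsum, aval.pow P 2 hb, aval.pow P 4 h2K,
          aval.pow P 4 h2b, aval.mul P h2K hb]
        omega
    · intro q hq
      obtain ⟨hBA, hZA⟩ := q_facts q ha hb hab hsum
        ((aval.eq_zero_iff q h2K).mpr (hval2 q hq)) (hjq q hq)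
      have hq2 : aval q (2:K) = 0 := (aval.eq_zero_iff q h2K).mpr (hval2 q hq)
      apply good_core q (c := b) hb
      · apply val_le_val q (pow_ne_zero 2 hb); intro hne
        have hba : b - a ≠ 0 := by
          intro h0; rw [h0, mul_zero] at hne; exact hne rfl
        rw [aval.mul q hb hba, aval.pow q 2 hb]
        have := aval.sub_le q hb ha hba
        omega
      · apply val_le_val q (pow_ne_zero 4 hb); intro _
        rw [show b^2*(-(a*b)) = -(b^2*(a*b)) by ring, aval.neg,
          aval.mul q (pow_ne_zero 2 hb) (mul_ne_zero ha hb), aval.pow q 2 hb,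
          aval.mul q ha hb, aval.pow q 4 hb]
        omega
      · apply val_eq_val q
          (mul_ne_zero (mul_ne_zero (pow_ne_zero 4 h2K) (pow_ne_zero 6 hb)) (pow_ne_zero 2 hprod))
          (pow_ne_zero 12 hb)
        rw [aval.mul q (mul_ne_zero (pow_ne_zero 4 h2K) (pow_ne_zero 6 hb)) (pow_ne_zero 2 hprod),
          aval.mul q (pow_ne_zero 4 h2K) (pow_ne_zero 6 hb), aval.pow q 4 h2K, aval.pow q 6 hb,
          aval.pow q 2 hprod, aval.mul q (mul_ne_zero ha hb) hab, aval.mul q ha hb,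
          aval.pow q 12 hb]
        omega
end

section
/- Let K be a number field, 𝔮 a prime of K not dividing 2, and λ ∈ K with λ ≠ 0, 1. If v_𝔮(2⁸(λ² − λ + 1)³ / (λ²(λ−1)²)) ≥ 0 (the j-invariant of Y² = X(X+1)(X+λ) is 𝔮-integral), then v_𝔮(16 λ²(λ−1)²) = 0, i.e. the discriminant of the model Y² = X(X+1)(X+λ) is a 𝔮-adic unit. -/
open NumberField IsDedekindDomain

/-! Put `y = λ(λ - 1)`, so that `λ² - λ + 1 = y + 1` and, as `v 2 = 1`, integrality of `j` reads
`v(y + 1)³ ≤ v(y)²`. By the ultrametric inequality `v(y + 1) = max (v y) 1` unless `v y = 1`, and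
either alternative `v y < 1` or `v y > 1` contradicts `v(y + 1)³ ≤ v(y)²`. Hence `v y = 1`, and the
discriminant `2⁴y²` is a unit. -/

theorem Valuation.map_eq_one_of_map_add_one_pow_le {R Γ₀ : Type*} [Ring R]
    [LinearOrderedCommGroupWithZero Γ₀] (v : Valuation R Γ₀) {y : R} {k n : ℕ} (hk : k ≠ 0)
    (hkn : k < n) (h : v (y + 1) ^ n ≤ v y ^ k) : v y = 1 := by
  rcases lt_trichotomy (v y) 1 with hlt | heq | hgt
  · rw [add_comm, v.map_one_add_of_lt hlt, one_pow] at h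
    exact absurd h (pow_lt_one₀ zero_le hlt hk).not_ge
  · exact heq
  · rw [v.map_add_eq_of_lt_left (by rwa [map_one])] at h
    exact absurd h (pow_lt_pow_right₀ hgt hkn).not_ge

/-- If the `j`-invariant `2⁸(λ²−λ+1)³/(λ²(λ−1)²)` of `Y² = X(X+1)(X+λ)` is integral at a
prime `𝔮 ∤ 2` of a number field `K`, then the discriminant `16λ²(λ−1)²` of this model is a
`𝔮`-adic unit.  (The multiplicative valuation `≤ 1` corresponds to additive valuation `≥ 0`.) -/
theorem discriminant_unit_of_j_integral {K : Type*} [Field K] [NumberField K]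
    (q : HeightOneSpectrum (𝓞 K)) (hq2 : (2 : 𝓞 K) ∉ q.asIdeal)
    (lam : K) (h0 : lam ≠ 0) (h1 : lam ≠ 1)
    (hj : q.valuation K (2 ^ 8 * (lam ^ 2 - lam + 1) ^ 3 / (lam ^ 2 * (lam - 1) ^ 2)) ≤ 1) :
    q.valuation K (16 * lam ^ 2 * (lam - 1) ^ 2) = 1 := by
  set v := q.valuation K
  have hv2 : v 2 = 1 := by
    simpa only [map_ofNat] using (q.valuation_eq_one_iff_notMem (K := K)).2 hq2
  set y := lam * (lam - 1)
  have hy : v y ≠ 0 := by simp [y, h0, sub_ne_zero.2 h1]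
  have hyj : v (y + 1) ^ 3 ≤ v y ^ 2 := by
    rwa [show 2 ^ 8 * (lam ^ 2 - lam + 1) ^ 3 / (lam ^ 2 * (lam - 1) ^ 2)
        = 2 ^ 8 * (y + 1) ^ 3 / y ^ 2 by ring, map_div₀, map_mul, map_pow, map_pow, map_pow, hv2,
      one_pow, one_mul, div_le_one₀ (pow_pos (zero_lt_iff.2 hy) 2)] at hj
  have hy1 : v y = 1 := v.map_eq_one_of_map_add_one_pow_le two_ne_zero (by norm_num) hyj
  calc v (16 * lam ^ 2 * (lam - 1) ^ 2) = v (2 ^ 4 * y ^ 2) :=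
      congrArg v (by ring)
    _ = 1 := by rw [map_mul, map_pow, map_pow, hv2, hy1, one_pow, one_pow, mul_one]
end

section
/- Let K be a number field, 𝔓 a prime of K above 2, and λ ∈ K with λ ≠ 0, 1. Suppose v_𝔓(λ) ≥ v_𝔓(1−λ) ≥ 0 and v_𝔓(j) < 0, where j = 2⁸(λ² − λ + 1)³/(λ²(λ−1)²). Then v_𝔓(λ) > 4·v_𝔓(2). -/
open NumberField IsDedekindDomain

/-! If `v λ ≥ 1`, the denominator of `j` has valuation `≥ 1` while its numerator has valuation
`≤ 1`, contradicting `v j > 1`; so `v λ < 1`. Then `1 - λ` and `λ² - λ + 1 = 1 - λ(1 - λ)` are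
units at `v`, and `v j > 1` reads `v λ ^ 2 < v 2 ^ 8`. -/

lemma lt_of_one_lt_div₀ {G : Type*} [LinearOrderedCommGroupWithZero G] {a b : G}
    (h : 1 < a / b) : b < a := by
  rcases eq_or_ne b 0 with rfl | hb
  · simp at h
  · exact (one_lt_div₀ (zero_lt_iff.mpr hb)).mp h

/-- The `j`-invariant of the Legendre curve `y² = x(x - 1)(x - λ)`. -/
def legendreJ {K : Type*} [Field K] (lam : K) : K :=
  2 ^ 8 * (lam ^ 2 - lam + 1) ^ 3 / (lam ^ 2 * (lam - 1) ^ 2)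

namespace Valuation

variable {K Γ₀ : Type*} [Field K] [LinearOrderedCommGroupWithZero Γ₀] (v : Valuation K Γ₀)
  {lam : K}

lemma map_two_le_one : v 2 ≤ 1 := by
  rw [← one_add_one_eq_two]
  exact v.map_add_le v.map_one.le v.map_one.le

lemma map_legendreJ (lam : K) : v (legendreJ lam) =
    v 2 ^ 8 * v (lam ^ 2 - lam + 1) ^ 3 / (v lam ^ 2 * v (1 - lam) ^ 2) := by
  simp only [legendreJ, map_div₀, map_mul, map_pow, v.map_sub_swap lam]

lemma map_sq_sub_self_add_one_le_one (ha : v lam ≤ 1) (hb : v (1 - lam) ≤ 1) :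
    v (lam ^ 2 - lam + 1) ≤ 1 := by
  rw [show lam ^ 2 - lam + 1 = 1 - lam * (1 - lam) by ring]
  refine v.map_sub_le v.map_one.le ?_
  rw [map_mul]
  exact mul_le_one' ha hb

lemma map_sq_sub_self_add_one_of_lt_one (ha : v lam < 1) : v (lam ^ 2 - lam + 1) = 1 := by
  rw [show lam ^ 2 - lam + 1 = 1 - lam * (1 - lam) by ring]
  apply v.map_one_sub_of_lt
  rw [map_mul, v.map_one_sub_of_lt ha, mul_one]
  exact ha

variable {v}

lemma lt_one_of_one_lt_legendreJ (hab : v lam ≤ v (1 - lam)) (hb : v (1 - lam) ≤ 1)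
    (hj : 1 < v (legendreJ lam)) : v lam < 1 := by
  by_contra! ha
  have hden : 1 ≤ v lam ^ 2 * v (1 - lam) ^ 2 :=
    one_le_mul (one_le_pow₀ ha) (one_le_pow₀ (ha.trans hab))
  have hnum : v 2 ^ 8 * v (lam ^ 2 - lam + 1) ^ 3 ≤ 1 :=
    mul_le_one' (pow_le_one' v.map_two_le_one 8)
      (pow_le_one' (v.map_sq_sub_self_add_one_le_one (hab.trans hb) hb) 3)
  rw [map_legendreJ] at hj
  exact (hnum.trans hden).not_gt (lt_of_one_lt_div₀ hj)

theorem lt_two_pow_four_of_one_lt_legendreJ (hab : v lam ≤ v (1 - lam)) (hb : v (1 - lam) ≤ 1)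
    (hj : 1 < v (legendreJ lam)) : v lam < v 2 ^ 4 := by
  have ha := lt_one_of_one_lt_legendreJ hab hb hj
  rw [map_legendreJ, v.map_one_sub_of_lt ha, v.map_sq_sub_self_add_one_of_lt_one ha] at hj
  refine lt_of_pow_lt_pow_left' 2 ?_
  simpa only [one_pow, mul_one, ← pow_mul] using lt_of_one_lt_div₀ hj

end Valuation

theorem valuation_lambda_gt_four_val_two_general {K : Type*} [Field K] [NumberField K]
    (P : HeightOneSpectrum (𝓞 K))
    (lam : K)
    (hord : P.valuation K lam ≤ P.valuation K (1 - lam) ∧ P.valuation K (1 - lam) ≤ 1)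
    (hj : 1 < P.valuation K (2 ^ 8 * (lam ^ 2 - lam + 1) ^ 3 / (lam ^ 2 * (lam - 1) ^ 2))) :
    P.valuation K lam < (P.valuation K (2 : K)) ^ 4 :=
  Valuation.lt_two_pow_four_of_one_lt_legendreJ hord.1 hord.2 hj

/-- Let `𝔓 | 2` be a prime of a number field `K` and `λ ∈ K`, `λ ≠ 0, 1`, with
`v_𝔓(λ) ≥ v_𝔓(1−λ) ≥ 0` and `v_𝔓(j) < 0` where `j = 2⁸(λ²−λ+1)³/(λ²(λ−1)²)`.
Then `v_𝔓(λ) > 4·v_𝔓(2)`.  (In the multiplicative valuation, additive `v(x) ≥ v(y)`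
corresponds to `valuation x ≤ valuation y`, and `v(λ) > 4 v(2)` to
`valuation λ < (valuation 2)⁴`.) -/
theorem valuation_lambda_gt_four_val_two {K : Type*} [Field K] [NumberField K]
    (P : HeightOneSpectrum (𝓞 K)) (hP2 : (2 : 𝓞 K) ∈ P.asIdeal)
    (lam : K) (h0 : lam ≠ 0) (h1 : lam ≠ 1)
    (hord : P.valuation K lam ≤ P.valuation K (1 - lam) ∧ P.valuation K (1 - lam) ≤ 1)
    (hj : 1 < P.valuation K (2 ^ 8 * (lam ^ 2 - lam + 1) ^ 3 / (lam ^ 2 * (lam - 1) ^ 2))) :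
    P.valuation K lam < (P.valuation K (2 : K)) ^ 4 :=
  valuation_lambda_gt_four_val_two_general P lam hord hj
end

section
/- Let K be a number field, 𝔓 a prime of K above 2, and λ ∈ K with v_𝔓(λ) > 4·v_𝔓(2). Then the quantity −c₄/c₆ = (λ² − λ + 1) / (4(1 − λ/2)(1 − 2λ)(1 + λ)) associated to the curve Y² = X(X+1)(X+λ) is a square in the completion K_𝔓. -/
open NumberField IsDedekindDomain

open Metric
open scoped Multiplicative

/-- In a complete ultrametric field, if `‖w‖ < 1` then `t + t² = w` has a solution. -/
lemma exists_root_of_norm_lt_one' {L : Type*} [NormedField L] [CompleteSpace L]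
    [IsUltrametricDist L] (w : L) (hw : ‖w‖ < 1) : ∃ t : L, t + t ^ 2 = w := by
  have hBc : IsClosed (Metric.closedBall (0 : L) ‖w‖) := Metric.isClosed_closedBall
  haveI : CompleteSpace (Metric.closedBall (0 : L) ‖w‖) := hBc.completeSpace_coe
  haveI : Nonempty (Metric.closedBall (0 : L) ‖w‖) :=
    ⟨⟨0, mem_closedBall_zero_iff.mpr (by simp)⟩⟩
  have hstep : ∀ t : Metric.closedBall (0 : L) ‖w‖, w - (t : L) ^ 2 ∈
      Metric.closedBall (0 : L) ‖w‖ := by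
    intro t
    have ht : ‖(t : L)‖ ≤ ‖w‖ := mem_closedBall_zero_iff.mp t.2
    have h2 : ‖(t : L) ^ 2‖ ≤ ‖w‖ := by
      rw [norm_pow, sq]
      calc ‖(t : L)‖ * ‖(t : L)‖ ≤ ‖w‖ * 1 :=
            mul_le_mul ht (ht.trans hw.le) (norm_nonneg _) (norm_nonneg _)
        _ = ‖w‖ := mul_one _
    rw [mem_closedBall_zero_iff, sub_eq_add_neg]
    exact (IsUltrametricDist.norm_add_le_max _ _).trans
      (max_le (le_refl _) (by rwa [norm_neg]))
  set f : Metric.closedBall (0 : L) ‖w‖ → Metric.closedBall (0 : L) ‖w‖ :=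
    fun t => ⟨w - (t : L) ^ 2, hstep t⟩ with hf
  have hlip : LipschitzWith ‖w‖₊ f := by
    apply LipschitzWith.of_dist_le_mul
    intro t s
    have ht : ‖(t : L)‖ ≤ ‖w‖ := mem_closedBall_zero_iff.mp t.2
    have hs : ‖(s : L)‖ ≤ ‖w‖ := mem_closedBall_zero_iff.mp s.2
    have hd : dist (f t) (f s) = ‖(s : L) + t‖ * ‖(t : L) - s‖ := by
      rw [Subtype.dist_eq, dist_eq_norm]
      simp only [hf]
      rw [show (w - (t:L)^2) - (w - (s:L)^2) = ((s:L) + t) * ((s:L) - t) by ring, norm_mul,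
        show ((s:L) - t) = -((t:L) - s) by ring, norm_neg]
    rw [hd, Subtype.dist_eq, dist_eq_norm]
    apply mul_le_mul_of_nonneg_right _ (norm_nonneg _)
    exact (IsUltrametricDist.norm_add_le_max _ _).trans (max_le hs ht)
  have hcw : ContractingWith ‖w‖₊ f := ⟨by exact_mod_cast hw, hlip⟩
  set t := ContractingWith.fixedPoint f hcw with htdef
  have hfix : f t = t := hcw.fixedPoint_isFixedPt
  refine ⟨(t : L), ?_⟩
  have h : w - (t : L) ^ 2 = (t : L) := congrArg Subtype.val hfix
  linear_combination -h


/-- If `𝔓 | 2` is a prime of a number field `K` and `λ ∈ K` satisfies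
`v_𝔓(λ) > 4·v_𝔓(2)` (multiplicatively, `valuation λ < (valuation 2)⁴`), then the quantity
`−c₄/c₆ = (λ²−λ+1)/(4(1−λ/2)(1−2λ)(1+λ))` attached to `Y² = X(X+1)(X+λ)` is a square in the
completion `K_𝔓`. -/
theorem neg_c4_div_c6_is_square {K : Type*} [Field K] [NumberField K]
    (P : HeightOneSpectrum (𝓞 K)) (hP2 : (2 : 𝓞 K) ∈ P.asIdeal)
    (lam : K) (hval : P.valuation K lam < (P.valuation K (2 : K)) ^ 4) :
    IsSquare (algebraMap K (P.adicCompletion K)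
      ((lam ^ 2 - lam + 1) / (4 * (1 - lam / 2) * (1 - 2 * lam) * (1 + lam)))) := by
  classical
  set v : Valuation K (WithZero (Multiplicative ℤ)) := P.valuation K with hvdef
  have h2K : (2 : K) ≠ 0 := two_ne_zero
  -- valuation of 2
  have hv2lt : v (2 : K) < 1 := by
    have h : algebraMap (𝓞 K) K (2 : 𝓞 K) = (2 : K) := map_ofNat _ 2
    rw [hvdef, ← h, P.valuation_lt_one_iff_dvd]
    exact Ideal.dvd_iff_le.mpr ((Ideal.span_singleton_le_iff_mem _).mpr hP2)
  have hv2ne : v (2 : K) ≠ 0 := by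
    rw [hvdef, Valuation.ne_zero_iff]; exact h2K
  have hv2pos : (0 : (WithZero (Multiplicative ℤ))) < v (2 : K) := zero_lt_iff.mpr hv2ne
  have hv2le : v (2 : K) ≤ 1 := hv2lt.le
  -- valuation of lam
  have hlam2 : v lam < v (2 : K) := by
    refine lt_of_lt_of_le hval ?_
    calc v (2:K) ^ 4 = v (2:K) * v (2:K) ^ 3 := pow_succ' _ _
      _ ≤ v (2:K) * 1 := mul_le_mul_right (pow_le_one' hv2le 3) _
      _ = v (2:K) := mul_one _
  have hlam1 : v lam < 1 := lt_of_lt_of_le hlam2 hv2le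
  have hlamle : v lam ≤ 1 := hlam1.le
  -- factors of the denominator
  have hhalf : v (lam / 2) < 1 := by
    rw [hvdef, map_div₀, ← hvdef, div_lt_iff₀ hv2pos, one_mul]
    exact hlam2
  have hdouble : v (2 * lam) < 1 := by
    rw [hvdef, map_mul, ← hvdef]
    calc v (2:K) * v lam ≤ v (2:K) * 1 := mul_le_mul_right hlamle _
      _ = v (2:K) := mul_one _
      _ < 1 := hv2lt
  have hf1 : v (1 - lam / 2) = 1 := v.map_one_sub_of_lt hhalf
  have hf2 : v (1 - 2 * lam) = 1 := v.map_one_sub_of_lt hdouble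
  have hf3 : v (1 + lam) = 1 := v.map_one_add_of_lt hlam1
  have hne1 : (1 - lam / 2) ≠ 0 := by
    rw [← Valuation.ne_zero_iff (v := v), hf1]; exact one_ne_zero
  have hne2 : (1 - 2 * lam) ≠ 0 := by
    rw [← Valuation.ne_zero_iff (v := v), hf2]; exact one_ne_zero
  have hne3 : (1 + lam) ≠ 0 := by
    rw [← Valuation.ne_zero_iff (v := v), hf3]; exact one_ne_zero
  set D : K := (1 - lam / 2) * (1 - 2 * lam) * (1 + lam) with hDdef
  have hD : v D = 1 := by rw [hvdef, hDdef, map_mul, map_mul, ← hvdef, hf1, hf2, hf3]; simp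
  have hDne : D ≠ 0 := by
    rw [← Valuation.ne_zero_iff (v := v), hD]; exact one_ne_zero
  set w₀ : K := ((lam ^ 2 - lam + 1) / D - 1) / 4 with hw₀def
  -- the key identity
  have hid : (8 : K) * w₀ * D = lam * (1 + (5 * lam - 2 * lam ^ 2)) := by
    have hw' : w₀ * (4 * D) = lam ^ 2 - lam + 1 - D := by
      rw [hw₀def]
      field_simp
    calc (8 : K) * w₀ * D = 2 * (w₀ * (4 * D)) := by ring
      _ = 2 * (lam ^ 2 - lam + 1 - D) := by rw [hw']
      _ = lam * (1 + (5 * lam - 2 * lam ^ 2)) := by rw [hDdef]; ring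
  -- valuation of the RHS of the identity
  have hsmall : v (5 * lam - 2 * lam ^ 2) < 1 := by
    refine lt_of_le_of_lt (Valuation.map_sub _ _ _) (max_lt ?_ ?_)
    · have h5 : v (5 : K) ≤ 1 := by
        have h : algebraMap (𝓞 K) K (5 : 𝓞 K) = (5 : K) := map_ofNat _ 5
        rw [hvdef, ← h]; exact P.valuation_le_one _
      calc v (5 * lam) = v (5:K) * v lam := map_mul _ _ _
        _ ≤ 1 * v lam := mul_le_mul_left h5 _
        _ = v lam := one_mul _
        _ < 1 := hlam1
    · calc v (2 * lam ^ 2) = v (2:K) * (v lam * v lam) := by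
            rw [hvdef, map_mul, map_pow, ← hvdef, sq]
        _ ≤ 1 * (v lam * 1) := by
            exact mul_le_mul' hv2le (mul_le_mul_right hlamle _)
        _ = v lam := by rw [one_mul, mul_one]
        _ < 1 := hlam1
  have hRHS : v (lam * (1 + (5 * lam - 2 * lam ^ 2))) = v lam := by
    rw [hvdef, map_mul, ← hvdef, v.map_one_add_of_lt hsmall, mul_one]
  -- valuation of 8
  have hv8 : v (8 : K) = v (2 : K) ^ 3 := by
    have h8 : (8 : K) = 2 * 2 * 2 := by norm_num
    rw [hvdef, h8, map_mul, map_mul, ← hvdef, pow_succ, pow_succ, pow_one]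
  have hkey : v (2:K) ^ 3 * v w₀ = v lam := by
    have := congrArg v hid
    rw [hRHS, hvdef, map_mul, map_mul, ← hvdef, hv8, hD, mul_one] at this
    exact this
  -- v w₀ < 1
  have hw0lt : v w₀ < 1 := by
    have hp3 : (0:(WithZero (Multiplicative ℤ))) < v (2:K) ^ 3 := zero_lt_iff.mpr (pow_ne_zero _ hv2ne)
    have hvw : v w₀ = v lam / v (2:K) ^ 3 := by
      rw [eq_div_iff (pow_ne_zero _ hv2ne), mul_comm]
      exact hkey
    rw [hvw, div_lt_iff₀ hp3, one_mul]
    calc v lam < v (2:K) ^ 4 := hval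
      _ = v (2:K) ^ 3 * v (2:K) := pow_succ _ _
      _ ≤ v (2:K) ^ 3 * 1 := mul_le_mul_right hv2le _
      _ = v (2:K) ^ 3 := mul_one _
  -- move to the completion
  have hvF : ∀ x : K, Valued.v ((algebraMap K (P.adicCompletion K)) x) = v x := by
    intro x
    have := P.valuedAdicCompletion_eq_valuation' x
    rw [hvdef, ← this]
    rfl
  haveI hrk : Valuation.RankOne (Valued.v : Valuation (P.adicCompletion K) (WithZero (Multiplicative ℤ))) :=
    inferInstance
  letI : NormedField (P.adicCompletion K) := Valued.toNormedField _ _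
  haveI : IsUltrametricDist (P.adicCompletion K) :=
    ⟨fun x y z => by
      refine (Valuation.norm_add_le _ (x - y) (y - z)).trans_eq' ?_
      simp only [sub_add_sub_cancel]
      rfl⟩
  haveI : CompleteSpace (P.adicCompletion K) := inferInstance
  set w : P.adicCompletion K := (algebraMap K (P.adicCompletion K)) w₀ with hwdef
  have hwnorm : ‖w‖ < 1 := by
    rw [Valued.toNormedField.norm_lt_one_iff, hwdef, hvF]
    exact hw0lt
  obtain ⟨t, ht⟩ := exists_root_of_norm_lt_one' w hwnorm
  haveI : CharZero (P.adicCompletion K) :=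
    charZero_of_injective_algebraMap (algebraMap K (P.adicCompletion K)).injective
  refine ⟨(2 * t + 1) / 2, ?_⟩
  have h2F : (2 : P.adicCompletion K) ≠ 0 := by
    have : (algebraMap K (P.adicCompletion K)) (2:K) = (2 : P.adicCompletion K) :=
      map_ofNat _ 2
    rw [← this]
    simp
    
  -- rewrite the target element
  have hKid : (lam ^ 2 - lam + 1) / (4 * (1 - lam / 2) * (1 - 2 * lam) * (1 + lam))
      = (4 * w₀ + 1) / 4 := by
    rw [hw₀def, hDdef]
    field_simp
    ring
  rw [hKid]
  simp only [map_div₀, map_add, map_mul, map_one, map_ofNat]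
  rw [← hwdef, ← ht]
  ring
end
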